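/- The ℚ-vector space Λ^3 k(t)^× is spanned by the image of the multiplication map k(t)^× ⊗ Λ^2 k^× → Λ^3 k(t)^×, f⊗(a∧b) ↦ f∧a∧b, together with the image of δ_3: B_2(k(t))⊗k(t)^× → Λ^3 k(t)^×. -/

import Mathlib

open scoped TensorProduct
open ExteriorAlgebra

noncomputable section ChowPrelim

universe u

/-- The ℚ-vector space `F^× ⊗ ℚ` attached to a field `F`. -/
abbrev UnitsQ (F : Type u) [Field F] : Type u := ℚ ⊗[ℤ] (Additive Fˣ)

/-- The canonical map `F → F^× ⊗ ℚ`, sending a nonzero `x` to `x ⊗ 1` and `0` to `0`. -/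
noncomputable def mkQ {F : Type u} [Field F] (x : F) : UnitsQ F :=
  letI := Classical.dec (x = 0)
  if h : x = 0 then 0 else (1 : ℚ) ⊗ₜ[ℤ] (Additive.ofMul (Units.mk0 x h))

/-- The wedge `x₁ ∧ ⋯ ∧ xₙ ∈ Λ^n (F^× ⊗ ℚ)` of a family of elements of `F`. -/
noncomputable def wedgeF {F : Type u} [Field F] (n : ℕ) (x : Fin n → F) :
    ⋀[ℚ]^n (UnitsQ F) :=
  ⟨ExteriorAlgebra.ιMulti ℚ n (fun i => mkQ (x i)),
    ExteriorAlgebra.ιMulti_range ℚ n ⟨_, rfl⟩⟩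

/-- Wedge of an abstract family of vectors. -/
noncomputable def wedgeV {M : Type u} [AddCommGroup M] [Module ℚ M] (n : ℕ) (v : Fin n → M) :
    ⋀[ℚ]^n M :=
  ⟨ExteriorAlgebra.ιMulti ℚ n v, ExteriorAlgebra.ιMulti_range ℚ n ⟨_, rfl⟩⟩

/-- The product `a ∧ v₁ ∧ ⋯ ∧ v_q : Λ^r M` of an element `a ∈ Λ^p M` with `q` further vectors,
where `p + q = r`. -/
noncomputable def wedgeMulC {M : Type u} [AddCommGroup M] [Module ℚ M] (p q r : ℕ)
    (h : p + q = r) (a : ⋀[ℚ]^p M) (v : Fin q → M) : ⋀[ℚ]^r M :=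
  ⟨a.1 * (ExteriorAlgebra.ιMulti ℚ q v : ExteriorAlgebra ℚ M), by
    subst h
    have hmem : (ExteriorAlgebra.ιMulti ℚ q v : ExteriorAlgebra ℚ M) ∈
        (LinearMap.range (ι ℚ : M →ₗ[ℚ] ExteriorAlgebra ℚ M)) ^ q :=
      ExteriorAlgebra.ιMulti_range ℚ q ⟨_, rfl⟩
    have h2 := Submodule.mul_mem_mul a.2 hmem
    rw [← pow_add] at h2
    exact h2⟩

/-- The functorial map `Λ^n M → Λ^n N` induced by a linear map. -/
noncomputable def powMap {M N : Type u} [AddCommGroup M] [Module ℚ M]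
    [AddCommGroup N] [Module ℚ N] (n : ℕ) (f : M →ₗ[ℚ] N) :
    ⋀[ℚ]^n M →ₗ[ℚ] ⋀[ℚ]^n N :=
  (ExteriorAlgebra.map f).toLinearMap.restrict (p := ⋀[ℚ]^n M) (q := ⋀[ℚ]^n N)
    (by
      intro x hx
      have h : Submodule.map (ExteriorAlgebra.map f).toLinearMap (⋀[ℚ]^n M) ≤ ⋀[ℚ]^n N := by
        rw [← ExteriorAlgebra.ιMulti_span_fixedDegree, ← ExteriorAlgebra.ιMulti_span_fixedDegree,
          Submodule.map_span]
        refine Submodule.span_le.2 ?_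
        rintro _ ⟨_, ⟨v, rfl⟩, rfl⟩
        exact Submodule.subset_span ⟨f ∘ v, (ExteriorAlgebra.map_apply_ιMulti f v).symm⟩
      exact h ⟨x, hx, rfl⟩)

/-- The linear map `F^× ⊗ ℚ → K^× ⊗ ℚ` induced by a field embedding. -/
noncomputable def unitsQMap {F K : Type u} [Field F] [Field K] (j : F →+* K) :
    UnitsQ F →ₗ[ℚ] UnitsQ K :=
  LinearMap.baseChange ℚ
    ((MonoidHom.toAdditive (Units.map (j : F →* K))).toIntLinearMap)

section PreBloch

variable (F : Type u) [Field F]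

/-- Auxiliary "difference" of two points of `P^1(F) = Option F` (`none` is `∞`),
used to define the cross-ratio. -/
def pdiff : Option F → Option F → F
  | some a, some b => a - b
  | _, _ => 1

/-- The cross-ratio of four points of `P^1(F)`, as an element of `F`
(it lies in `F ∖ {0,1}` when the four points are distinct). -/
def crossRatio (x1 x2 x3 x4 : Option F) : F :=
  (pdiff F x1 x3 * pdiff F x2 x4) / (pdiff F x1 x4 * pdiff F x2 x3)

/-- The subspace of relations defining the pre-Bloch group: `{0}₂, {1}₂, {∞}₂` and the
five-term cross-ratio relations for five distinct points of `P^1(F)`. -/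
def B2Rel : Submodule ℚ (Option F →₀ ℚ) :=
  Submodule.span ℚ
    ({Finsupp.single (some 0) 1, Finsupp.single (some 1) 1, Finsupp.single none 1} ∪
      {r | ∃ x : Fin 5 → Option F, Function.Injective x ∧
        r = ∑ i : Fin 5, ((-1 : ℚ) ^ (i : ℕ)) •
          Finsupp.single (some (crossRatio F (x (i.succAbove 0)) (x (i.succAbove 1))
            (x (i.succAbove 2)) (x (i.succAbove 3)))) (1 : ℚ)})

/-- The pre-Bloch group `B₂(F)` (with ℚ-coefficients). -/
abbrev B2 : Type u := (Option F →₀ ℚ) ⧸ B2Rel F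

/-- The generator `{x}₂` of the pre-Bloch group. -/
def B2.gen {F : Type u} [Field F] (x : F) : B2 F :=
  Submodule.Quotient.mk (Finsupp.single (some x) 1)

end PreBloch

section Deltas

variable (F : Type u) [Field F]

/-- `d` is the differential `δ₂ : B₂(F) → Λ² F^×`, `{x}₂ ↦ x ∧ (1-x)`. -/
def IsDelta2 (d : B2 F →ₗ[ℚ] ⋀[ℚ]^2 (UnitsQ F)) : Prop :=
  ∀ x : F, x ≠ 0 → x ≠ 1 → d (B2.gen x) = wedgeF 2 ![x, 1 - x]

/-- `d` is the differential `δ₃ : B₂(F) ⊗ F^× → Λ³ F^×`, `{x}₂ ⊗ y ↦ x ∧ (1-x) ∧ y`. -/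
def IsDelta3 (d : B2 F ⊗[ℚ] UnitsQ F →ₗ[ℚ] ⋀[ℚ]^3 (UnitsQ F)) : Prop :=
  ∀ x y : F, x ≠ 0 → x ≠ 1 → y ≠ 0 →
    d (B2.gen x ⊗ₜ mkQ y) = wedgeF 3 ![x, 1 - x, y]

/-- `d` is the differential `δ₄ : B₂(F) ⊗ Λ² F^× → Λ⁴ F^×`,
`{x}₂ ⊗ (y ∧ z) ↦ x ∧ (1-x) ∧ y ∧ z`. -/
def IsDelta4 (d : B2 F ⊗[ℚ] (⋀[ℚ]^2 (UnitsQ F)) →ₗ[ℚ] ⋀[ℚ]^4 (UnitsQ F)) : Prop :=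
  ∀ x y z : F, x ≠ 0 → x ≠ 1 → y ≠ 0 → z ≠ 0 →
    d (B2.gen x ⊗ₜ wedgeF 2 ![y, z]) = wedgeF 4 ![x, 1 - x, y, z]

end Deltas

section Valuations

variable {F K : Type u} [Field F] [Field K]

/-- `ν` is (the additive form of) a discrete valuation on `F`:
a surjection onto `ℤ` defined on `F ∖ {0}`, multiplicative, and
satisfying the ultrametric inequality. -/
structure IsDVal (ν : F → ℤ) : Prop where
  map_mul : ∀ x y : F, x ≠ 0 → y ≠ 0 → ν (x * y) = ν x + ν y
  map_add : ∀ x y : F, x ≠ 0 → y ≠ 0 → x + y ≠ 0 → min (ν x) (ν y) ≤ ν (x + y)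
  surj : ∀ n : ℤ, ∃ x : F, x ≠ 0 ∧ ν x = n

/-- `res : F → K` realizes `K` as the residue field of the discrete valuation `ν`:
it is a surjective ring homomorphism on the valuation ring `O_ν` with kernel the
maximal ideal `m_ν` (and arbitrary elsewhere). -/
structure IsResidue (ν : F → ℤ) (res : F → K) : Prop where
  map_one : res 1 = 1
  map_add : ∀ x y : F, (x = 0 ∨ 0 ≤ ν x) → (y = 0 ∨ 0 ≤ ν y) →
    res (x + y) = res x + res y
  map_mul : ∀ x y : F, (x = 0 ∨ 0 ≤ ν x) → (y = 0 ∨ 0 ≤ ν y) →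
    res (x * y) = res x * res y
  zero_iff : ∀ x : F, (x = 0 ∨ 0 ≤ ν x) → (res x = 0 ↔ (x = 0 ∨ 0 < ν x))
  surj : ∀ z : K, ∃ x : F, (x = 0 ∨ 0 ≤ ν x) ∧ res x = z

/-- `D` is the tame symbol `∂_ν^{(n+1)} : Λ^{n+1} F^× → Λ^n K^×` attached to the discrete
valuation `ν` with residue field `K` (via `res`): it is characterized by
`∂(π ∧ u₂ ∧ ⋯ ∧ u_{n+1}) = ū₂ ∧ ⋯ ∧ ū_{n+1}` for a uniformizer `π` and units `uᵢ`. -/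
def IsTame (ν : F → ℤ) (res : F → K) (n : ℕ)
    (D : ⋀[ℚ]^(n + 1) (UnitsQ F) →ₗ[ℚ] ⋀[ℚ]^n (UnitsQ K)) : Prop :=
  ∀ (π : F) (u : Fin n → F), π ≠ 0 → ν π = 1 → (∀ i, u i ≠ 0 ∧ ν (u i) = 0) →
    D (wedgeF (n + 1) (Fin.cons π u)) = wedgeF n (fun i => res (u i))

/-- `D` is the tame symbol `∂_ν^{(2)} : Λ² F^× → K^×`, with target the residue field itself. -/
def IsTame2U (ν : F → ℤ) (res : F → K) (D : ⋀[ℚ]^2 (UnitsQ F) →ₗ[ℚ] UnitsQ K) : Prop :=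
  ∀ π u : F, π ≠ 0 → ν π = 1 → u ≠ 0 → ν u = 0 → D (wedgeF 2 ![π, u]) = mkQ (res u)

/-- `D` is the tame symbol `∂_ν : B₂(F) ⊗ F^× → B₂(K)`. -/
def IsTameB1 (ν : F → ℤ) (res : F → K)
    (D : B2 F ⊗[ℚ] UnitsQ F →ₗ[ℚ] B2 K) : Prop :=
  (∀ a b : F, a ≠ 0 → a ≠ 1 → ν a ≠ 0 → b ≠ 0 → D (B2.gen a ⊗ₜ mkQ b) = 0) ∧
  (∀ u b : F, u ≠ 0 → ν u = 0 → b ≠ 0 →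
    D (B2.gen u ⊗ₜ mkQ b) = -((ν b : ℚ) • B2.gen (res u)))

/-- `D` is the tame symbol `∂_ν : B₂(F) ⊗ Λ² F^× → B₂(K) ⊗ K^×`, where `D2` is the tame
symbol `∂_ν^{(2)}`. -/
def IsTameB2 (ν : F → ℤ) (res : F → K) (D2 : ⋀[ℚ]^2 (UnitsQ F) →ₗ[ℚ] UnitsQ K)
    (D : B2 F ⊗[ℚ] (⋀[ℚ]^2 (UnitsQ F)) →ₗ[ℚ] B2 K ⊗[ℚ] UnitsQ K) : Prop :=
  (∀ (a : F) (b : ⋀[ℚ]^2 (UnitsQ F)), a ≠ 0 → a ≠ 1 → ν a ≠ 0 → D (B2.gen a ⊗ₜ b) = 0) ∧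
  (∀ (u : F) (b : ⋀[ℚ]^2 (UnitsQ F)), u ≠ 0 → ν u = 0 →
    D (B2.gen u ⊗ₜ b) = -(B2.gen (res u) ⊗ₜ D2 b))

/-- `D` is the tame symbol `∂_ν : B₂(F) ⊗ Λ^{n+1} F^× → B₂(K) ⊗ Λ^n K^×`, where `Dn` is
the tame symbol `∂_ν^{(n+1)}`. -/
def IsTameBGen (ν : F → ℤ) (res : F → K) (n : ℕ)
    (Dn : ⋀[ℚ]^(n + 1) (UnitsQ F) →ₗ[ℚ] ⋀[ℚ]^n (UnitsQ K))
    (D : B2 F ⊗[ℚ] (⋀[ℚ]^(n + 1) (UnitsQ F)) →ₗ[ℚ] B2 K ⊗[ℚ] (⋀[ℚ]^n (UnitsQ K))) : Prop :=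
  (∀ (a : F) (b : ⋀[ℚ]^(n + 1) (UnitsQ F)), a ≠ 0 → a ≠ 1 → ν a ≠ 0 →
    D (B2.gen a ⊗ₜ b) = 0) ∧
  (∀ (u : F) (b : ⋀[ℚ]^(n + 1) (UnitsQ F)), u ≠ 0 → ν u = 0 →
    D (B2.gen u ⊗ₜ b) = -(B2.gen (res u) ⊗ₜ Dn b))

end Valuations

section Fields

variable (k F : Type u) [Field k] [Field F] [Algebra k F]

/-- `F` is a finitely generated extension of `k` of transcendence degree `1`. -/
def IsFields1 : Prop :=
  (∃ s : Finset F, IntermediateField.adjoin k (s : Set F) = ⊤) ∧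
  ∃ x : F, Transcendental k x ∧
    Algebra.IsAlgebraic (IntermediateField.adjoin k {x}) F

/-- `F` is a finitely generated extension of `k` of transcendence degree `2`. -/
def IsFields2 : Prop :=
  (∃ s : Finset F, IntermediateField.adjoin k (s : Set F) = ⊤) ∧
  ∃ x y : F, AlgebraicIndependent k ![x, y] ∧
    Algebra.IsAlgebraic (IntermediateField.adjoin k {x, y}) F

/-- `res : F → k` is the canonical residue map of `ν` onto `k`
(restricting to the identity on `k`). -/
def GoodResK (ν : F → ℤ) (res : F → k) : Prop :=
  IsResidue ν res ∧ ∀ c : k, res (algebraMap k F c) = c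

/-- The set `val(F)` of discrete valuations of `F` trivial on `k` with residue field `k`. -/
def ValInd : Type u :=
  {ν : F → ℤ // IsDVal ν ∧ (∀ c : k, c ≠ 0 → ν (algebraMap k F c) = 0) ∧
    ∃ res : F → k, GoodResK k F ν res}

/-- `h : Λ³ F^× → B₂(k)` is a lifted reciprocity map on `F ∈ Fields₁`:
(1) `-δ₂(h a) = Σ_{ν ∈ val(F)} ∂_ν^{(3)} a`;
(2) `h (δ₃ c) = Σ_{ν ∈ val(F)} ∂_ν c`;
(3) `h` vanishes on the image of `Λ² F^× ⊗ k^× → Λ³ F^×`. -/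
def IsLiftedRec (h : ⋀[ℚ]^3 (UnitsQ F) →ₗ[ℚ] B2 k) : Prop :=
  (∀ d2 : B2 k →ₗ[ℚ] ⋀[ℚ]^2 (UnitsQ k), IsDelta2 k d2 →
    ∀ res : ∀ _ : ValInd k F, F → k, (∀ v : ValInd k F, GoodResK k F v.1 (res v)) →
    ∀ D : ∀ _ : ValInd k F, ⋀[ℚ]^3 (UnitsQ F) →ₗ[ℚ] ⋀[ℚ]^2 (UnitsQ k),
      (∀ v : ValInd k F, IsTame v.1 (res v) 2 (D v)) →
    ∀ a : ⋀[ℚ]^3 (UnitsQ F), -(d2 (h a)) = ∑ᶠ v : ValInd k F, D v a) ∧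
  (∀ d3 : B2 F ⊗[ℚ] UnitsQ F →ₗ[ℚ] ⋀[ℚ]^3 (UnitsQ F), IsDelta3 F d3 →
    ∀ res : ∀ _ : ValInd k F, F → k, (∀ v : ValInd k F, GoodResK k F v.1 (res v)) →
    ∀ DB : ∀ _ : ValInd k F, B2 F ⊗[ℚ] UnitsQ F →ₗ[ℚ] B2 k,
      (∀ v : ValInd k F, IsTameB1 v.1 (res v) (DB v)) →
    ∀ c : B2 F ⊗[ℚ] UnitsQ F, h (d3 c) = ∑ᶠ v : ValInd k F, DB v c) ∧
  (∀ (y z : F) (c : k), y ≠ 0 → z ≠ 0 → c ≠ 0 →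
    h (wedgeF 3 ![y, z, algebraMap k F c]) = 0)

end Fields

/-- The degree `[K : j(F)]` of a field embedding. -/
noncomputable def fieldDeg {F K : Type u} [Field F] [Field K] (j : F →+* K) : ℕ :=
  letI : Algebra F K := j.toAlgebra
  Module.finrank F K

/-- The pullback `j^* h = (1/[F₂ : j(F₁)]) · h ∘ j_*` of a lifted reciprocity map. -/
noncomputable def pullRec (k F₁ F₂ : Type u) [Field k] [Field F₁] [Field F₂]
    (j : F₁ →+* F₂) (h : ⋀[ℚ]^3 (UnitsQ F₂) →ₗ[ℚ] B2 k) :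
    ⋀[ℚ]^3 (UnitsQ F₁) →ₗ[ℚ] B2 k :=
  ((fieldDeg j : ℚ))⁻¹ • (h ∘ₗ powMap 3 (unitsQMap j))

end ChowPrelim

noncomputable section ChowPrelim2

universe u

open scoped TensorProduct

/-- The monic irreducible polynomials over `F`, indexing the closed points of `𝔸¹_F`,
i.e. the general discrete valuations of `F(t)`. -/
def MonicIrr (F : Type u) [Field F] : Type u :=
  {p : Polynomial F // p.Monic ∧ Irreducible p}

/-- The residue field `F(p) = F[t]/(p)` of the valuation attached to a monic irreducible
polynomial `p`. -/
def ResField {F : Type u} [Field F] (p : MonicIrr F) : Type u := AdjoinRoot p.1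

noncomputable instance ResField.instField {F : Type u} [Field F] (p : MonicIrr F) :
    Field (ResField p) :=
  letI : Fact (Irreducible p.1) := ⟨p.2.2⟩
  inferInstanceAs (Field (AdjoinRoot p.1))

/-- `ν` is the discrete valuation of `F(t)` attached to the monic irreducible polynomial `p`. -/
def IsNuP {F : Type u} [Field F] (p : MonicIrr F) (ν : RatFunc F → ℤ) : Prop :=
  IsDVal ν ∧ ν (algebraMap (Polynomial F) (RatFunc F) p.1) = 1 ∧
    ∀ g : Polynomial F, g ≠ 0 → ¬(p.1 ∣ g) →
      ν (algebraMap (Polynomial F) (RatFunc F) g) = 0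

/-- `res` is the canonical residue map `F(t) → F(p)` of the valuation attached to `p`. -/
def IsResP {F : Type u} [Field F] (p : MonicIrr F) (ν : RatFunc F → ℤ)
    (res : RatFunc F → ResField p) : Prop :=
  IsResidue ν res ∧ ∀ g : Polynomial F,
    res (algebraMap (Polynomial F) (RatFunc F) g) =
      (AdjoinRoot.mk p.1 g : AdjoinRoot p.1)

/-- Bundled realization of the residue field of a discrete valuation `ν` on `L`
(trivial on `k`): a field `R` with a `k`-algebra structure together with the residue map. -/
structure ResData (k L : Type u) [Field k] [Field L] [Algebra k L] (ν : L → ℤ) :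
    Type (u + 1) where
  R : Type u
  [fieldR : Field R]
  [algR : Algebra k R]
  res : L → R
  isRes : IsResidue ν res
  compat : ∀ c : k, res (algebraMap k L c) = algebraMap k R c

attribute [instance] ResData.fieldR ResData.algR

/-- The set `dval(L)` of divisorial valuations of `L ∈ Fields₂`: discrete valuations trivial
on `k` whose residue field is a finitely generated extension of `k` of transcendence
degree `1`. -/
def DValInd (k L : Type u) [Field k] [Field L] [Algebra k L] : Type u :=
  {ν : L → ℤ // IsDVal ν ∧ (∀ c : k, c ≠ 0 → ν (algebraMap k L c) = 0) ∧
    ∃ rd : ResData k L ν, IsFields1 k rd.R}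

/-- A height-one prime ideal (in a domain). -/
def IsHeightOne {R : Type u} [CommRing R] (p : Ideal R) : Prop :=
  p.IsPrime ∧ p ≠ ⊥ ∧ ∀ q : Ideal R, q.IsPrime → q < p → q = ⊥

/-- `R/p` is regular, i.e. (for a one-dimensional local ring) the maximal ideal of `R/p`
is principal. -/
def QuotRegular {R : Type u} [CommRing R] [IsLocalRing R] (p : Ideal R) : Prop :=
  ∃ t : R, Ideal.map (Ideal.Quotient.mk p) (IsLocalRing.maximalIdeal R) =
    Ideal.span {Ideal.Quotient.mk p t}

/-- The height-one primes `p` of `R` with `R/p` regular. -/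
def RegPrimes (R : Type u) [CommRing R] [IsLocalRing R] : Type u :=
  {p : Ideal R // IsHeightOne p ∧ QuotRegular p}

instance RegPrimes.isPrime {R : Type u} [CommRing R] [IsLocalRing R] (p : RegPrimes R) :
    p.1.IsPrime := p.2.1.1

/-- The residue field `κ(p) = Frac(R/p)` of a prime `p`. -/
def ResFieldP {R : Type u} [CommRing R] [IsLocalRing R] [IsDomain R] (p : RegPrimes R) :
    Type u := FractionRing (R ⧸ p.1)

noncomputable instance ResFieldP.instField {R : Type u} [CommRing R] [IsLocalRing R]
    [IsDomain R] (p : RegPrimes R) : Field (ResFieldP p) :=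
  inferInstanceAs (Field (FractionRing (R ⧸ p.1)))

/-- `ν` is the discrete valuation `ν_p` of `L = Frac R` attached to a height-one prime `p`:
it is nonnegative on `R` and positive exactly on `p`. -/
def IsNuPrime {R L : Type u} [CommRing R] [Field L] [Algebra R L] (p : Ideal R)
    (ν : L → ℤ) : Prop :=
  IsDVal ν ∧ (∀ x : R, x ≠ 0 → 0 ≤ ν (algebraMap R L x)) ∧
    ∀ x : R, x ≠ 0 → (x ∈ p ↔ 0 < ν (algebraMap R L x))

/-- `res` is the canonical residue map `L → κ(p)` of the valuation `ν_p`. -/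
def IsResPrime {R L : Type u} [CommRing R] [IsLocalRing R] [IsDomain R] [Field L]
    [Algebra R L] (p : RegPrimes R) (ν : L → ℤ) (res : L → ResFieldP p) : Prop :=
  IsResidue ν res ∧ ∀ x : R,
    res (algebraMap R L x) =
      algebraMap (R ⧸ p.1) (FractionRing (R ⧸ p.1)) (Ideal.Quotient.mk p.1 x)

/-- `ν̄` is the discrete valuation of `κ(p)` attached to the discrete valuation ring `R/p`:
nonnegative on `R/p` and positive exactly on the image of the maximal ideal of `R`. -/
def IsNuBar {R : Type u} [CommRing R] [IsLocalRing R] [IsDomain R] (p : RegPrimes R)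
    (ν : ResFieldP p → ℤ) : Prop :=
  IsDVal ν ∧
  (∀ x : R ⧸ p.1, x ≠ 0 →
    0 ≤ ν (algebraMap (R ⧸ p.1) (FractionRing (R ⧸ p.1)) x)) ∧
  ∀ x : R, Ideal.Quotient.mk p.1 x ≠ 0 →
    (x ∈ IsLocalRing.maximalIdeal R ↔
      0 < ν (algebraMap (R ⧸ p.1) (FractionRing (R ⧸ p.1)) (Ideal.Quotient.mk p.1 x)))

/-- `res` is the canonical residue map `κ(p) → k` of the valuation `ν̄_p`
(restricting to the identity on `k`). -/
def IsResBar {k R : Type u} [Field k] [CommRing R] [IsLocalRing R] [IsDomain R]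
    [Algebra k R] (p : RegPrimes R) (ν : ResFieldP p → ℤ) (res : ResFieldP p → k) : Prop :=
  IsResidue ν res ∧ ∀ c : k,
    res (algebraMap (R ⧸ p.1) (FractionRing (R ⧸ p.1))
      (Ideal.Quotient.mk p.1 (algebraMap k R c))) = c

/-- The Steinberg relations subspace of `Λ^n F^×` (with ℚ-coefficients). -/
def MilnorRel (F : Type u) [Field F] : (n : ℕ) → Submodule ℚ (⋀[ℚ]^n (UnitsQ F))
  | 0 => ⊥
  | 1 => ⊥
  | (m + 2) => Submodule.span ℚ
      {x | ∃ (a : F) (v : Fin m → F), a ≠ 0 ∧ a ≠ 1 ∧ (∀ i, v i ≠ 0) ∧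
        x = wedgeF (m + 2) (Fin.cons a (Fin.cons (1 - a) v))}

/-- The rational Milnor K-group `K_n^M(F) ⊗ ℚ`: the quotient of `Λ^n F^×` by the
Steinberg relations. -/
def MilnorQ (F : Type u) [Field F] (n : ℕ) : Type u :=
  (⋀[ℚ]^n (UnitsQ F)) ⧸ MilnorRel F n

noncomputable instance MilnorQ.instAddCommGroup (F : Type u) [Field F] (n : ℕ) :
    AddCommGroup (MilnorQ F n) :=
  inferInstanceAs (AddCommGroup ((⋀[ℚ]^n (UnitsQ F)) ⧸ MilnorRel F n))

noncomputable instance MilnorQ.instModule (F : Type u) [Field F] (n : ℕ) :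
    Module ℚ (MilnorQ F n) :=
  inferInstanceAs (Module ℚ ((⋀[ℚ]^n (UnitsQ F)) ⧸ MilnorRel F n))

/-- The class of an element of `Λ^n F^×` in `K_n^M(F) ⊗ ℚ`. -/
def MilnorQ.mk {F : Type u} [Field F] {n : ℕ} (x : ⋀[ℚ]^n (UnitsQ F)) : MilnorQ F n :=
  Submodule.Quotient.mk x

end ChowPrelim2

open scoped TensorProduct

universe u

/-!
Since `k` is algebraically closed, `k(t)^× ⊗ ℚ` is spanned by the constants and the linear
factors `t - a`, so `Λ³ k(t)^×` is spanned by triple wedges of these. Those with at least two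
constant factors come from `k(t)^× ⊗ Λ² k^×`. For `a ≠ b` put `c = b - a`, so that
`1 - (t - a)/c = -(t - b)/c`; then `δ₃({(t - a)/c}₂ ⊗ y)` equals `(t - a) ∧ (t - b) ∧ y` up to
wedges containing the constant `c`. Taking `y` constant handles wedges with two linear factors,
and then taking `y` linear handles those with three.
-/

section UnitsQ

variable {F : Type u} [Field F]

lemma mkQ_units (x : Fˣ) : mkQ (x : F) = (1 : ℚ) ⊗ₜ[ℤ] Additive.ofMul x := by
  rw [mkQ, dif_neg x.ne_zero, Units.mk0_val]

lemma mkQ_one : mkQ (1 : F) = 0 := by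
  rw [← Units.val_one, mkQ_units, ofMul_one, TensorProduct.tmul_zero]

lemma mkQ_mul {x y : F} (hx : x ≠ 0) (hy : y ≠ 0) : mkQ (x * y) = mkQ x + mkQ y := by
  lift x to Fˣ using hx.isUnit
  lift y to Fˣ using hy.isUnit
  rw [← Units.val_mul, mkQ_units, mkQ_units, mkQ_units, ofMul_mul, TensorProduct.tmul_add]

lemma mkQ_neg_one : mkQ (-1 : F) = 0 := by
  have h := mkQ_mul (neg_ne_zero.2 (one_ne_zero (α := F))) (neg_ne_zero.2 one_ne_zero)
  rw [neg_one_mul, neg_neg, mkQ_one, ← two_smul ℚ, eq_comm, smul_eq_zero] at h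
  exact h.resolve_left two_ne_zero

lemma mkQ_neg {x : F} (hx : x ≠ 0) : mkQ (-x) = mkQ x := by
  rw [← neg_one_mul, mkQ_mul (neg_ne_zero.2 one_ne_zero) hx, mkQ_neg_one, zero_add]

lemma mkQ_div {x y : F} (hx : x ≠ 0) (hy : y ≠ 0) : mkQ (x / y) = mkQ x - mkQ y := by
  rw [eq_sub_iff_add_eq, ← mkQ_mul (div_ne_zero hx hy) hy, div_mul_cancel₀ x hy]

lemma mkQ_multiset_prod {m : Multiset F} (hm : ∀ x ∈ m, x ≠ 0) :
    mkQ m.prod = (m.map mkQ).sum := by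
  induction m using Multiset.induction_on with
  | empty => simp [mkQ_one]
  | cons a m ih =>
    rw [Multiset.forall_mem_cons] at hm
    rw [Multiset.prod_cons, mkQ_mul hm.1 (Multiset.prod_ne_zero fun h => hm.2 0 h rfl),
      Multiset.map_cons, Multiset.sum_cons, ih hm.2]

lemma span_range_mkQ : Submodule.span ℚ (Set.range (mkQ (F := F))) = ⊤ := by
  rw [eq_top_iff]
  rintro w -
  induction w using TensorProduct.induction_on with
  | zero => exact zero_mem _
  | add v w hv hw => exact add_mem hv hw
  | tmul q x =>
    rw [← mul_one q, ← smul_eq_mul, ← TensorProduct.smul_tmul', ← ofMul_toMul x, ← mkQ_units]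
    exact Submodule.smul_mem _ _ (Submodule.subset_span ⟨_, rfl⟩)

end UnitsQ

section Wedge

variable {M : Type u} [AddCommGroup M] [Module ℚ M]

lemma wedgeV_eq_ιMulti (n : ℕ) (v : Fin n → M) :
    wedgeV n v = exteriorPower.ιMulti ℚ n v :=
  rfl

lemma wedgeV_swap01 (x y z : M) : wedgeV 3 ![y, x, z] = -wedgeV 3 ![x, y, z] := by
  rw [wedgeV_eq_ιMulti, wedgeV_eq_ιMulti,
    ← (exteriorPower.ιMulti ℚ 3).map_swap ![x, y, z] (i := 0) (j := 1) (by decide)]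
  congr
  ext i
  fin_cases i <;> rfl

lemma wedgeV_swap12 (x y z : M) : wedgeV 3 ![x, z, y] = -wedgeV 3 ![x, y, z] := by
  rw [wedgeV_eq_ιMulti, wedgeV_eq_ιMulti,
    ← (exteriorPower.ιMulti ℚ 3).map_swap ![x, y, z] (i := 1) (j := 2) (by decide)]
  congr
  ext i
  fin_cases i <;> rfl

lemma coe_wedgeV_three (x y z : M) :
    (wedgeV 3 ![x, y, z] : ExteriorAlgebra ℚ M) = ι ℚ x * ι ℚ y * ι ℚ z := by
  simp [wedgeV, ExteriorAlgebra.ιMulti_apply, mul_assoc]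

lemma wedgeV_sub_sub (x y z w : M) :
    wedgeV 3 ![x - w, y - w, z] =
      wedgeV 3 ![x, y, z] - wedgeV 3 ![x, w, z] - wedgeV 3 ![w, y, z] := by
  ext
  simp only [Submodule.coe_sub, coe_wedgeV_three, map_sub, sub_mul, mul_sub, ι_sq_zero, zero_mul]
  abel

lemma Submodule.eq_top_of_wedgeV_three_mem {S : Set M} (hS : Submodule.span ℚ S = ⊤)
    (N : Submodule ℚ (⋀[ℚ]^3 M)) (h : ∀ x ∈ S, ∀ y ∈ S, ∀ z ∈ S, wedgeV 3 ![x, y, z] ∈ N) :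
    N = ⊤ := by
  rw [eq_top_iff, ← exteriorPower.ιMulti_span_of_span ℚ 3 M hS, Submodule.span_le]
  rintro _ ⟨v, hv, rfl⟩
  rw [Set.mem_ofPred_eq, Set.range_subset_iff] at hv
  rw [← wedgeV_eq_ιMulti, ← FinVec.etaExpand_eq v]
  exact h _ (hv 0) _ (hv 1) _ (hv 2)

variable {F : Type u} [Field F] (N : Submodule ℚ (⋀[ℚ]^3 (UnitsQ F)))

lemma wedgeF_eq_wedgeV (f g h : F) :
    wedgeF 3 ![f, g, h] = wedgeV 3 ![mkQ f, mkQ g, mkQ h] := by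
  rw [wedgeF, wedgeV]
  congr
  ext i
  fin_cases i <;> rfl

lemma wedgeF_self01 (f h : F) : wedgeF 3 ![f, f, h] = 0 := by
  rw [wedgeF_eq_wedgeV, wedgeV_eq_ιMulti]
  exact AlternatingMap.map_eq_zero_of_eq _ _ (i := 0) (j := 1) rfl (by decide)

lemma wedgeF_swap01_mem_iff (f g h : F) :
    wedgeF 3 ![g, f, h] ∈ N ↔ wedgeF 3 ![f, g, h] ∈ N := by
  rw [wedgeF_eq_wedgeV, wedgeF_eq_wedgeV, wedgeV_swap01, neg_mem_iff]

lemma wedgeF_swap12_mem_iff (f g h : F) :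
    wedgeF 3 ![f, h, g] ∈ N ↔ wedgeF 3 ![f, g, h] ∈ N := by
  rw [wedgeF_eq_wedgeV, wedgeF_eq_wedgeV, wedgeV_swap12, neg_mem_iff]

end Wedge

lemma IsDelta3.apply_gen_div_sub {F : Type u} [Field F]
    {d3 : B2 F ⊗[ℚ] UnitsQ F →ₗ[ℚ] ⋀[ℚ]^3 (UnitsQ F)} (hd3 : IsDelta3 F d3)
    {u v y : F} (hu : u ≠ 0) (hv : v ≠ 0) (huv : u ≠ v) (hy : y ≠ 0) :
    d3 (B2.gen (u / (u - v)) ⊗ₜ mkQ y) =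
      wedgeF 3 ![u, v, y] - wedgeF 3 ![u, u - v, y] - wedgeF 3 ![u - v, v, y] := by
  have hc : u - v ≠ 0 := sub_ne_zero.2 huv
  have h1x : 1 - u / (u - v) = -v / (u - v) := by field_simp; ring
  have hx1 : u / (u - v) ≠ 1 := by
    rw [ne_eq, div_eq_one_iff_eq hc]
    exact fun h => hv (by linear_combination h)
  rw [hd3 _ _ (div_ne_zero hu hc) hx1 hy, h1x, wedgeF_eq_wedgeV, mkQ_div hu hc,
    mkQ_div (neg_ne_zero.2 hv) hc, mkQ_neg hv, wedgeV_sub_sub]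
  simp only [wedgeF_eq_wedgeV]

section LinFactor

open Polynomial

variable {k : Type u} [Field k]

noncomputable def linFactor (a : k) : RatFunc k := algebraMap k[X] (RatFunc k) (X - C a)

lemma linFactor_ne_zero (a : k) : linFactor a ≠ 0 :=
  (map_ne_zero_iff _ (IsFractionRing.injective k[X] (RatFunc k))).2 (X_sub_C_ne_zero a)

lemma linFactor_sub_linFactor (a b : k) :
    linFactor a - linFactor b = algebraMap k (RatFunc k) (b - a) := by
  rw [linFactor, linFactor, ← map_sub, sub_sub_sub_cancel_left, ← C_sub, RatFunc.algebraMap_C,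
    RatFunc.algebraMap_eq_C]

lemma algebraMap_eq_prod_linFactor [IsAlgClosed k] (p : k[X]) :
    algebraMap k[X] (RatFunc k) p =
      (algebraMap k (RatFunc k) p.leadingCoeff ::ₘ p.roots.map linFactor).prod := by
  conv_lhs => rw [(IsAlgClosed.splits p).eq_prod_roots]
  rw [Multiset.prod_cons, map_mul, map_multiset_prod, Multiset.map_map, RatFunc.algebraMap_C,
    RatFunc.algebraMap_eq_C]
  rfl

lemma span_mkQ_const_union_linFactor [IsAlgClosed k] :
    Submodule.span ℚ (mkQ '' (algebraMap k (RatFunc k) '' {0}ᶜ ∪ Set.range linFactor)) = ⊤ := by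
  set T := algebraMap k (RatFunc k) '' {0}ᶜ ∪ Set.range linFactor
  have hpoly (p : k[X]) (hp : p ≠ 0) :
      mkQ (algebraMap k[X] (RatFunc k) p) ∈ Submodule.span ℚ (mkQ '' T) := by
    have hmem : ∀ f ∈ algebraMap k (RatFunc k) p.leadingCoeff ::ₘ p.roots.map linFactor,
        f ∈ T := by
      simp only [Multiset.mem_cons, Multiset.mem_map]
      rintro f (rfl | ⟨a, -, rfl⟩)
      · exact Or.inl ⟨_, leadingCoeff_ne_zero.2 hp, rfl⟩
      · exact Or.inr ⟨a, rfl⟩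
    have hne : ∀ f ∈ algebraMap k (RatFunc k) p.leadingCoeff ::ₘ p.roots.map linFactor,
        f ≠ 0 := by
      intro f hf
      rcases hmem f hf with ⟨c, hc, rfl⟩ | ⟨a, rfl⟩
      · exact (_root_.map_ne_zero _).2 hc
      · exact linFactor_ne_zero a
    rw [algebraMap_eq_prod_linFactor, mkQ_multiset_prod hne]
    refine multiset_sum_mem _ fun v hv => ?_
    obtain ⟨f, hf, rfl⟩ := Multiset.mem_map.1 hv
    exact Submodule.subset_span ⟨f, hmem f hf, rfl⟩
  rw [eq_top_iff, ← span_range_mkQ, Submodule.span_le]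
  rintro _ ⟨f, rfl⟩
  rcases eq_or_ne f 0 with rfl | hf
  · rw [mkQ, dif_pos rfl]
    exact zero_mem _
  have hinj := IsFractionRing.injective k[X] (RatFunc k)
  rw [← RatFunc.num_div_denom f, mkQ_div ((map_ne_zero_iff _ hinj).2 (RatFunc.num_ne_zero hf))
    ((map_ne_zero_iff _ hinj).2 f.denom_ne_zero)]
  exact sub_mem (hpoly _ (RatFunc.num_ne_zero hf)) (hpoly _ f.denom_ne_zero)

end LinFactor
section MulDelta3Span

variable (k : Type u) [Field k]

noncomputable def mulDelta3Span
    (d3 : B2 (RatFunc k) ⊗[ℚ] UnitsQ (RatFunc k) →ₗ[ℚ] ⋀[ℚ]^3 (UnitsQ (RatFunc k))) :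
    Submodule ℚ (⋀[ℚ]^3 (UnitsQ (RatFunc k))) :=
  Submodule.span ℚ
    ({x | ∃ (f : RatFunc k) (a b : k), f ≠ 0 ∧ a ≠ 0 ∧ b ≠ 0 ∧
        x = wedgeF 3 ![f, algebraMap k (RatFunc k) a, algebraMap k (RatFunc k) b]} ∪
      Set.range d3)

variable {k}
variable {d3 : B2 (RatFunc k) ⊗[ℚ] UnitsQ (RatFunc k) →ₗ[ℚ] ⋀[ℚ]^3 (UnitsQ (RatFunc k))}

lemma wedgeF_const_const_mem_mulDelta3Span {f : RatFunc k} {a b : k} (hf : f ≠ 0)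
    (ha : a ≠ 0) (hb : b ≠ 0) :
    wedgeF 3 ![f, algebraMap k (RatFunc k) a, algebraMap k (RatFunc k) b] ∈
      mulDelta3Span k d3 :=
  Submodule.subset_span (Or.inl ⟨f, a, b, hf, ha, hb, rfl⟩)

lemma wedgeF_linFactor_linFactor_mem_mulDelta3Span (hd3 : IsDelta3 (RatFunc k) d3)
    (a b : k) {y : RatFunc k} (hy : y ≠ 0)
    (ha : ∀ c : k, c ≠ 0 →
      wedgeF 3 ![linFactor a, algebraMap k (RatFunc k) c, y] ∈ mulDelta3Span k d3)
    (hb : ∀ c : k, c ≠ 0 →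
      wedgeF 3 ![linFactor b, algebraMap k (RatFunc k) c, y] ∈ mulDelta3Span k d3) :
    wedgeF 3 ![linFactor a, linFactor b, y] ∈ mulDelta3Span k d3 := by
  rcases eq_or_ne a b with rfl | hab
  · rw [wedgeF_self01]
    exact zero_mem _
  have hc : b - a ≠ 0 := sub_ne_zero.2 hab.symm
  have hne : linFactor a ≠ linFactor b := by
    rw [← sub_ne_zero, linFactor_sub_linFactor]
    exact (map_ne_zero _).2 hc
  have hδ := hd3.apply_gen_div_sub (linFactor_ne_zero a) (linFactor_ne_zero b) hne hy
  rw [linFactor_sub_linFactor, sub_sub, eq_sub_iff_add_eq] at hδ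
  rw [← hδ]
  refine add_mem (Submodule.subset_span (Or.inr ⟨_, rfl⟩)) (add_mem (ha _ hc) ?_)
  rw [wedgeF_swap01_mem_iff]
  exact hb _ hc

lemma wedgeF_linFactor_linFactor_const_mem_mulDelta3Span (hd3 : IsDelta3 (RatFunc k) d3)
    (a b : k) {c : k} (hc : c ≠ 0) :
    wedgeF 3 ![linFactor a, linFactor b, algebraMap k (RatFunc k) c] ∈ mulDelta3Span k d3 :=
  wedgeF_linFactor_linFactor_mem_mulDelta3Span hd3 a b ((map_ne_zero _).2 hc)
    (fun _ hd => wedgeF_const_const_mem_mulDelta3Span (linFactor_ne_zero a) hd hc)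
    (fun _ hd => wedgeF_const_const_mem_mulDelta3Span (linFactor_ne_zero b) hd hc)

lemma wedgeF_linFactor_linFactor_linFactor_mem_mulDelta3Span
    (hd3 : IsDelta3 (RatFunc k) d3) (a b c : k) :
    wedgeF 3 ![linFactor a, linFactor b, linFactor c] ∈ mulDelta3Span k d3 := by
  refine wedgeF_linFactor_linFactor_mem_mulDelta3Span hd3 a b (linFactor_ne_zero c)
    (fun _ hd => ?_) (fun _ hd => ?_) <;>
  · rw [wedgeF_swap12_mem_iff]
    exact wedgeF_linFactor_linFactor_const_mem_mulDelta3Span hd3 _ c hd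

lemma mulDelta3Span_eq_top [IsAlgClosed k] (hd3 : IsDelta3 (RatFunc k) d3) :
    mulDelta3Span k d3 = ⊤ := by
  refine Submodule.eq_top_of_wedgeV_three_mem span_mkQ_const_union_linFactor _ ?_
  rintro _ ⟨f, hf, rfl⟩ _ ⟨g, hg, rfl⟩ _ ⟨h, hh, rfl⟩
  rw [← wedgeF_eq_wedgeV]
  rcases hf with ⟨a, ha, rfl⟩ | ⟨a, rfl⟩ <;> rcases hg with ⟨b, hb, rfl⟩ | ⟨b, rfl⟩ <;>
    rcases hh with ⟨c, hc, rfl⟩ | ⟨c, rfl⟩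
  · exact wedgeF_const_const_mem_mulDelta3Span ((map_ne_zero _).2 ha) hb hc
  · rw [wedgeF_swap12_mem_iff, wedgeF_swap01_mem_iff]
    exact wedgeF_const_const_mem_mulDelta3Span (linFactor_ne_zero c) ha hb
  · rw [wedgeF_swap01_mem_iff]
    exact wedgeF_const_const_mem_mulDelta3Span (linFactor_ne_zero b) ha hc
  · rw [wedgeF_swap01_mem_iff, wedgeF_swap12_mem_iff]
    exact wedgeF_linFactor_linFactor_const_mem_mulDelta3Span hd3 b c ha
  · exact wedgeF_const_const_mem_mulDelta3Span (linFactor_ne_zero a) hb hc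
  · rw [wedgeF_swap12_mem_iff]
    exact wedgeF_linFactor_linFactor_const_mem_mulDelta3Span hd3 a c hb
  · exact wedgeF_linFactor_linFactor_const_mem_mulDelta3Span hd3 a b hc
  · exact wedgeF_linFactor_linFactor_linFactor_mem_mulDelta3Span hd3 a b c

end MulDelta3Span

theorem statement_4_general (k : Type u) [Field k] [IsAlgClosed k]
    (d3 : B2 (RatFunc k) ⊗[ℚ] UnitsQ (RatFunc k) →ₗ[ℚ] ⋀[ℚ]^3 (UnitsQ (RatFunc k)))
    (hd3 : IsDelta3 (RatFunc k) d3) :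
    Submodule.span ℚ
      ({x | ∃ (f : RatFunc k) (a b : k), f ≠ 0 ∧ a ≠ 0 ∧ b ≠ 0 ∧
          x = wedgeF 3 ![f, algebraMap k (RatFunc k) a, algebraMap k (RatFunc k) b]} ∪
        Set.range d3) = ⊤ :=
  mulDelta3Span_eq_top hd3

/-- `Λ³ k(t)^×` is spanned by the image of `k(t)^× ⊗ Λ²k^×` together with
the image of `δ₃`. -/
theorem statement_4 (k : Type u) [Field k] [IsAlgClosed k] [CharZero k]
    (d3 : B2 (RatFunc k) ⊗[ℚ] UnitsQ (RatFunc k) →ₗ[ℚ] ⋀[ℚ]^3 (UnitsQ (RatFunc k)))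
    (hd3 : IsDelta3 (RatFunc k) d3) :
    Submodule.span ℚ
      ({x | ∃ (f : RatFunc k) (a b : k), f ≠ 0 ∧ a ≠ 0 ∧ b ≠ 0 ∧
          x = wedgeF 3 ![f, algebraMap k (RatFunc k) a, algebraMap k (RatFunc k) b]} ∪
        Set.range d3) = ⊤ :=
  statement_4_general k d3 hd3
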